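/- arXiv:1907.07119 — 7 statements merged into one kernel-verified Lean document; each statement's English description precedes it below -/
import Mathlib

section
/- Let d, n, M ∈ ℕ with N = n+1 and nodes t_1,...,t_M ∈ [0,1)^d, z_j = e^{2πi t_j} ∈ T^d componentwise. Let A ∈ C^{M × N^d} be the Vandermonde matrix with entries z_j^α for multi-indices α with ‖α‖_∞ ≤ n. Suppose that for every unit vector v ∈ C^M there exist ε ∈ C^M with ‖ε‖_2 ≤ c < 1 and a trigonometric polynomial f of max-degree at most n in d variables with f(t_j) = v_j + ε_j for all j. Then ‖A* v‖_2 ≥ (1 - ‖ε‖_2)·‖f‖_{L²(T^d)}^{-1}, and consequently the smallest singular value of A satisfies σ_min(A) ≥ (1-c)/sup_f ‖f‖_{L²}. -/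
open Real Matrix MeasureTheory

/-- Wrap-around distance on the torus. -/
noncomputable def wrap (x : ℝ) : ℝ := ⨅ r : ℤ, |x + (r : ℝ)|

/-- Modified Dirichlet kernel. -/
noncomputable def dirich (m : ℕ) (t : ℝ) : ℂ :=
  ((m : ℂ) + 1)⁻¹ * ∑ k ∈ Finset.range (m + 1), Complex.exp (2 * Real.pi * Complex.I * k * t)

open scoped InnerProductSpace

/-! The Fourier coefficients of `μ = ∑ j, v j • δ (t j)` are the entries of `Aᴴ v`, so pairing them
with the coefficients of `f` gives `⟪Aᴴ v, ĝ⟫ = ∑ j, conj (v j) * f (t j) = ‖v‖² + ⟪v, ε⟫`. By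
Cauchy–Schwarz and Parseval the left side is at most `‖Aᴴ v‖ ‖f‖_{L²}`, while the right side is at
least `1 - ‖ε‖`. -/

section

variable {𝕜 E F : Type*} [RCLike 𝕜] [NormedAddCommGroup E] [InnerProductSpace 𝕜 E]
  [NormedAddCommGroup F] [InnerProductSpace 𝕜 F]

theorem one_sub_norm_le_norm_mul_norm_of_inner_eq {v ε : F} {w g : E} (hv : ‖v‖ = 1)
    (h : ⟪w, g⟫_𝕜 = ⟪v, v + ε⟫_𝕜) : 1 - ‖ε‖ ≤ ‖w‖ * ‖g‖ := by
  have hvv : ⟪v, v + ε⟫_𝕜 = 1 + ⟪v, ε⟫_𝕜 := by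
    rw [inner_add_right, inner_self_eq_norm_sq_to_K, hv]; simp
  have hvε : ‖⟪v, ε⟫_𝕜‖ ≤ ‖ε‖ := by
    simpa [hv] using norm_inner_le_norm (𝕜 := 𝕜) v ε
  calc 1 - ‖ε‖ ≤ ‖(1 : 𝕜)‖ - ‖⟪v, ε⟫_𝕜‖ := by rw [norm_one]; linarith
    _ ≤ ‖⟪v, v + ε⟫_𝕜‖ := hvv ▸ norm_sub_le_norm_add _ _
    _ = ‖⟪w, g⟫_𝕜‖ := by rw [h]
    _ ≤ ‖w‖ * ‖g‖ := norm_inner_le_norm w g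

end

section

variable {𝕜 m n : Type*} [RCLike 𝕜] [Fintype m] [Fintype n]

theorem Matrix.inner_toLp_conjTranspose_mulVec (A : Matrix m n 𝕜) (v : m → 𝕜) (g : n → 𝕜) :
    ⟪WithLp.toLp 2 (Aᴴ *ᵥ v), WithLp.toLp 2 g⟫_𝕜 = ⟪WithLp.toLp 2 v, WithLp.toLp 2 (A *ᵥ g)⟫_𝕜 := by
  simp only [EuclideanSpace.inner_toLp_toLp, star_mulVec, conjTranspose_conjTranspose]
  rw [dotProduct_comm, ← dotProduct_mulVec, dotProduct_comm]

theorem Matrix.one_sub_sqrt_le_of_mulVec_eq (A : Matrix m n 𝕜) {v ε : m → 𝕜} {g : n → 𝕜}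
    (hv : ∑ j, ‖v j‖ ^ 2 = 1) (hg : A *ᵥ g = v + ε) :
    1 - √(∑ j, ‖ε j‖ ^ 2) ≤ √(∑ α, ‖(Aᴴ *ᵥ v) α‖ ^ 2) * √(∑ α, ‖g α‖ ^ 2) := by
  have := one_sub_norm_le_norm_mul_norm_of_inner_eq (v := WithLp.toLp 2 v) (ε := WithLp.toLp 2 ε)
    (w := WithLp.toLp 2 (Aᴴ *ᵥ v)) (g := WithLp.toLp 2 g)
    (by simp [EuclideanSpace.norm_eq, hv])
    (by rw [A.inner_toLp_conjTranspose_mulVec, hg, WithLp.toLp_add])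
  simpa [EuclideanSpace.norm_eq] using this

end

theorem stmt2_general (d n M : ℕ) (t : Fin M → Fin d → ℝ)
    (c : ℝ)
    (A : Matrix (Fin M) (Fin d → Fin (n + 1)) ℂ)
    (hA : ∀ j α, A j α
      = Complex.exp (2 * π * Complex.I * ((∑ ℓ, ((α ℓ : ℕ) : ℝ) * t j ℓ : ℝ) : ℂ))) :
    (∀ (v ε : Fin M → ℂ) (g : (Fin d → Fin (n + 1)) → ℂ),
      (∑ j, ‖v j‖ ^ 2) = 1 →
      Real.sqrt (∑ j, ‖ε j‖ ^ 2) ≤ c →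
      (∀ j, (∑ α, g α * Complex.exp (2 * π * Complex.I
          * ((∑ ℓ, ((α ℓ : ℕ) : ℝ) * t j ℓ : ℝ) : ℂ))) = v j + ε j) →
      Real.sqrt (∑ α, ‖Aᴴ.mulVec v α‖ ^ 2)
        ≥ (1 - Real.sqrt (∑ j, ‖ε j‖ ^ 2)) * (Real.sqrt (∑ α, ‖g α‖ ^ 2))⁻¹) ∧
    (∀ B : ℝ, 0 < B →
      (∀ v : Fin M → ℂ, (∑ j, ‖v j‖ ^ 2) = 1 →
        ∃ (ε : Fin M → ℂ) (g : (Fin d → Fin (n + 1)) → ℂ),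
          Real.sqrt (∑ j, ‖ε j‖ ^ 2) ≤ c ∧
          (∀ j, (∑ α, g α * Complex.exp (2 * π * Complex.I
              * ((∑ ℓ, ((α ℓ : ℕ) : ℝ) * t j ℓ : ℝ) : ℂ))) = v j + ε j) ∧
          Real.sqrt (∑ α, ‖g α‖ ^ 2) ≤ B) →
      ∀ v : Fin M → ℂ, (∑ j, ‖v j‖ ^ 2) = 1 →
        Real.sqrt (∑ α, ‖Aᴴ.mulVec v α‖ ^ 2) ≥ (1 - c) / B) := by
  have hAg : ∀ g, A *ᵥ g = fun j ↦ ∑ α, g α * Complex.exp (2 * π * Complex.I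
      * ((∑ ℓ, ((α ℓ : ℕ) : ℝ) * t j ℓ : ℝ) : ℂ)) :=
    fun g ↦ funext fun j ↦ by simp only [mulVec, dotProduct, hA, mul_comm]
  refine ⟨fun v ε g hv _ hfg ↦ ?_, fun B hB hcover v hv ↦ ?_⟩
  · rcases (Real.sqrt_nonneg (∑ α, ‖g α‖ ^ 2)).eq_or_lt with hg | hg
    · rw [← hg, _root_.inv_zero, mul_zero]
      exact Real.sqrt_nonneg _
    · rw [ge_iff_le, ← div_eq_mul_inv, div_le_iff₀ hg]
      exact A.one_sub_sqrt_le_of_mulVec_eq hv (by rw [hAg]; exact funext hfg)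
  · obtain ⟨ε, g, hε, hfg, hgB⟩ := hcover v hv
    rw [ge_iff_le, div_le_iff₀ hB]
    calc 1 - c ≤ 1 - √(∑ j, ‖ε j‖ ^ 2) := by linarith
      _ ≤ √(∑ α, ‖(Aᴴ *ᵥ v) α‖ ^ 2) * √(∑ α, ‖g α‖ ^ 2) :=
          A.one_sub_sqrt_le_of_mulVec_eq hv (by rw [hAg]; exact funext hfg)
      _ ≤ √(∑ α, ‖(Aᴴ *ᵥ v) α‖ ^ 2) * B := by gcongr

theorem stmt2 (d n M : ℕ) (hd : 0 < d) (hM : 0 < M) (t : Fin M → Fin d → ℝ)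
    (ht : ∀ j ℓ, t j ℓ ∈ Set.Ico (0:ℝ) 1) (c : ℝ) (hc : c < 1)
    (A : Matrix (Fin M) (Fin d → Fin (n + 1)) ℂ)
    (hA : ∀ j α, A j α
      = Complex.exp (2 * π * Complex.I * ((∑ ℓ, ((α ℓ : ℕ) : ℝ) * t j ℓ : ℝ) : ℂ))) :
    (∀ (v ε : Fin M → ℂ) (g : (Fin d → Fin (n + 1)) → ℂ),
      (∑ j, ‖v j‖ ^ 2) = 1 →
      Real.sqrt (∑ j, ‖ε j‖ ^ 2) ≤ c →
      (∀ j, (∑ α, g α * Complex.exp (2 * π * Complex.I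
          * ((∑ ℓ, ((α ℓ : ℕ) : ℝ) * t j ℓ : ℝ) : ℂ))) = v j + ε j) →
      Real.sqrt (∑ α, ‖Aᴴ.mulVec v α‖ ^ 2)
        ≥ (1 - Real.sqrt (∑ j, ‖ε j‖ ^ 2)) * (Real.sqrt (∑ α, ‖g α‖ ^ 2))⁻¹) ∧
    (∀ B : ℝ, 0 < B →
      (∀ v : Fin M → ℂ, (∑ j, ‖v j‖ ^ 2) = 1 →
        ∃ (ε : Fin M → ℂ) (g : (Fin d → Fin (n + 1)) → ℂ),
          Real.sqrt (∑ j, ‖ε j‖ ^ 2) ≤ c ∧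
          (∀ j, (∑ α, g α * Complex.exp (2 * π * Complex.I
              * ((∑ ℓ, ((α ℓ : ℕ) : ℝ) * t j ℓ : ℝ) : ℂ))) = v j + ε j) ∧
          Real.sqrt (∑ α, ‖g α‖ ^ 2) ≤ B) →
      ∀ v : Fin M → ℂ, (∑ j, ‖v j‖ ^ 2) = 1 →
        Real.sqrt (∑ α, ‖Aᴴ.mulVec v α‖ ^ 2) ≥ (1 - c) / B) :=
  stmt2_general d n M t c A hA
end

section
/- For m ∈ ℕ with m ≥ 2, the squared L² norm of the square of the modified Dirichlet kernel satisfies ‖d_m²‖_{L²(T)}² = (1/(m+1))·(2/3 + 1/(3(m+1)²)) ≤ (1/(m+1))·(1/√2). -/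
open Real Matrix MeasureTheory

/-!
Squaring `d_m` gives the trigonometric polynomial `(m+1)⁻² ∑_{k ≤ 2m} c_k e(kt)`, where
`c_k = min k (2m - k) + 1` counts the ways to write `k = a + b` with `0 ≤ a, b ≤ m`.
Orthogonality of the exponentials on `[0, 1]` turns its squared `L²` norm into
`(m+1)⁻⁴ ∑ c_k²`, and `∑ c_k² = 2 ∑_{j ≤ m} j² + (m+1)² = (m+1)(2(m+1)² + 1)/3`.
The bound then reduces to `2/3 + 1/27 = 19/27 ≤ 1/√2`.
-/

open Complex (I)
open Finset
open scoped ComplexConjugate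

theorem integral_exp_two_pi_I_int_mul (n : ℤ) :
    ∫ t in (0:ℝ)..1, Complex.exp (2 * π * I * n * t) = if n = 0 then 1 else 0 := by
  split_ifs with hn
  · simp [hn]
  have hc : 2 * π * I * n ≠ 0 := by simp [Real.pi_ne_zero, Complex.I_ne_zero, hn]
  rw [integral_exp_mul_complex hc, show 2 * π * I * n = n * (2 * π * I) by ring]
  simp [Complex.exp_int_mul_two_pi_mul_I]

theorem exp_two_pi_I_mul_conj_exp (n n' : ℤ) (t : ℝ) :
    Complex.exp (2 * π * I * n * t) * conj (Complex.exp (2 * π * I * n' * t))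
      = Complex.exp (2 * π * I * (n - n' : ℤ) * t) := by
  rw [← Complex.exp_conj, ← Complex.exp_add]
  congr 1
  simp only [map_mul, Complex.conj_I, Complex.conj_ofReal, map_intCast, map_ofNat]
  push_cast
  ring

theorem integral_norm_sq_sum_exp {ι : Type*} (s : Finset ι) (n : ι → ℤ) (hn : Set.InjOn n s)
    (c : ι → ℂ) :
    ∫ t in (0:ℝ)..1, ‖∑ i ∈ s, c i * Complex.exp (2 * π * I * n i * t)‖ ^ 2
      = ∑ i ∈ s, ‖c i‖ ^ 2 := by
  have expand (t : ℝ) (i j : ι) : c i * Complex.exp (2 * π * I * n i * t)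
      * conj (c j * Complex.exp (2 * π * I * n j * t))
      = c i * conj (c j) * Complex.exp (2 * π * I * (n i - n j : ℤ) * t) := by
    rw [map_mul, mul_mul_mul_comm, exp_two_pi_I_mul_conj_exp]
  apply Complex.ofReal_injective
  push_cast
  rw [← intervalIntegral.integral_ofReal]
  simp_rw [Complex.ofReal_pow, ← Complex.mul_conj', map_sum, sum_mul_sum, expand]
  rw [intervalIntegral.integral_finsetSum fun i _ =>
    (continuous_finsetSum _ fun j _ => by fun_prop).intervalIntegrable _ _]
  refine sum_congr rfl fun i hi => ?_
  rw [intervalIntegral.integral_finsetSum fun j _ =>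
    (by fun_prop : Continuous _).intervalIntegrable _ _]
  simp_rw [intervalIntegral.integral_const_mul, integral_exp_two_pi_I_int_mul, sub_eq_zero]
  rw [sum_eq_single_of_mem i hi fun j hj hji => by simp [hn.ne hi hj hji.symm]]
  simp

def repCount (m k : ℕ) : ℕ := #{p ∈ range (m + 1) ×ˢ range (m + 1) | p.1 + p.2 = k}

theorem repCount_eq {m k : ℕ} (hk : k ≤ 2 * m) : repCount m k = min k (2 * m - k) + 1 := by
  have : {p ∈ range (m + 1) ×ˢ range (m + 1) | p.1 + p.2 = k}
      = (Icc (k - m) (min k m)).image fun a => (a, k - a) := by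
    ext ⟨a, b⟩
    simp only [mem_filter, mem_product, mem_range, mem_image, mem_Icc, Prod.mk.injEq]
    constructor
    · rintro ⟨⟨ha, hb⟩, rfl⟩
      exact ⟨a, by omega, rfl, by omega⟩
    · rintro ⟨a, ha, rfl, rfl⟩
      omega
  rw [repCount, this, card_image_of_injective _ fun a b h => (Prod.mk.inj h).1, Nat.card_Icc]
  omega

theorem six_mul_sum_range_succ_sq (n : ℕ) :
    6 * ∑ i ∈ range n, (i + 1) ^ 2 = n * (n + 1) * (2 * n + 1) := by
  induction n with
  | zero => simp
  | succ n ih => rw [sum_range_succ, mul_add, ih]; ring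

theorem three_mul_sum_repCount_sq (m : ℕ) :
    3 * ∑ k ∈ range (2 * m + 1), repCount m k ^ 2 = (m + 1) * (2 * (m + 1) ^ 2 + 1) := by
  have hlow : ∀ k ∈ range (m + 1), repCount m k ^ 2 = (k + 1) ^ 2 := fun k hk => by
    rw [mem_range] at hk
    rw [repCount_eq (by omega)]
    congr 2
    omega
  have hhigh : ∀ i ∈ range m, repCount m (m + 1 + i) ^ 2 = (m - 1 - i + 1) ^ 2 := fun i hi => by
    rw [mem_range] at hi
    rw [repCount_eq (by omega)]
    congr 2
    omega
  rw [show 2 * m + 1 = (m + 1) + m by ring, sum_range_add, sum_congr rfl hlow,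
    sum_congr rfl hhigh, sum_range_reflect (fun i => (i + 1) ^ 2) m]
  have hsum_succ := six_mul_sum_range_succ_sq (m + 1)
  have hsum := six_mul_sum_range_succ_sq m
  linarith

theorem sq_sum_exp_eq_sum_repCount (m : ℕ) (t : ℝ) :
    (∑ k ∈ range (m + 1), Complex.exp (2 * π * I * k * t)) ^ 2
      = ∑ k ∈ range (2 * m + 1), (repCount m k : ℂ) * Complex.exp (2 * π * I * k * t) := by
  have hadd (p : ℕ × ℕ) : Complex.exp (2 * π * I * p.1 * t) * Complex.exp (2 * π * I * p.2 * t)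
      = Complex.exp (2 * π * I * (p.1 + p.2 : ℕ) * t) := by
    rw [← Complex.exp_add]
    congr 1
    push_cast
    ring
  have hmaps : ∀ p ∈ range (m + 1) ×ˢ range (m + 1), p.1 + p.2 ∈ range (2 * m + 1) := by
    simp only [mem_product, mem_range]; omega
  rw [sq, sum_mul_sum, ← sum_product', sum_congr rfl fun p _ => hadd p,
    ← sum_fiberwise_of_maps_to hmaps]
  refine sum_congr rfl fun k _ => ?_
  rw [sum_congr rfl fun p hp => by rw [(mem_filter.1 hp).2], sum_const, nsmul_eq_mul, repCount]

theorem dirich_sq (m : ℕ) (t : ℝ) :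
    dirich m t ^ 2 = ∑ k ∈ range (2 * m + 1),
      ((m : ℂ) + 1)⁻¹ ^ 2 * repCount m k * Complex.exp (2 * π * I * k * t) := by
  simp_rw [dirich, mul_pow, sq_sum_exp_eq_sum_repCount, mul_sum, mul_assoc]

theorem integral_norm_dirich_sq_sq (m : ℕ) :
    ∫ t in (0:ℝ)..1, ‖dirich m t ^ 2‖ ^ 2
      = ((m : ℝ) + 1)⁻¹ ^ 4 * ∑ k ∈ range (2 * m + 1), (repCount m k : ℝ) ^ 2 := by
  have parseval := integral_norm_sq_sum_exp (range (2 * m + 1)) (fun k : ℕ => (k : ℤ))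
    Nat.cast_injective.injOn fun k => ((m : ℂ) + 1)⁻¹ ^ 2 * repCount m k
  push_cast at parseval
  have hnorm : ‖(m : ℂ) + 1‖ = m + 1 := by exact_mod_cast Complex.norm_natCast (m + 1)
  simp_rw [dirich_sq, parseval, mul_sum, norm_mul, norm_pow, norm_inv, hnorm,
    Complex.norm_natCast]
  exact sum_congr rfl fun k _ => by ring

theorem two_thirds_add_le_inv_sqrt_two {x : ℝ} (hx : 3 ≤ x) :
    2 / 3 + 1 / (3 * x ^ 2) ≤ 1 / √2 := by
  have hsmall : 1 / (3 * x ^ 2) ≤ 1 / 27 := by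
    rw [div_le_div_iff₀ (by positivity) (by norm_num)]; nlinarith
  have hsqrt : √2 ≤ 27 / 19 := Real.sqrt_le_iff.2 ⟨by norm_num, by norm_num⟩
  calc 2 / 3 + 1 / (3 * x ^ 2) ≤ 1 / (27 / 19) := by linarith
    _ ≤ 1 / √2 := one_div_le_one_div_of_le (by positivity) hsqrt

theorem stmt7 (m : ℕ) (hm : 2 ≤ m) :
    (∫ t in (0:ℝ)..1, ‖(dirich m t) ^ 2‖ ^ 2)
      = 1 / ((m : ℝ) + 1) * (2 / 3 + 1 / (3 * ((m : ℝ) + 1) ^ 2)) ∧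
    1 / ((m : ℝ) + 1) * (2 / 3 + 1 / (3 * ((m : ℝ) + 1) ^ 2))
      ≤ 1 / ((m : ℝ) + 1) * (1 / Real.sqrt 2) := by
  have hm' : (3 : ℝ) ≤ m + 1 := by norm_cast; omega
  refine ⟨?_, mul_le_mul_of_nonneg_left (two_thirds_add_le_inv_sqrt_two hm') (by positivity)⟩
  have hsum : 3 * ∑ k ∈ range (2 * m + 1), (repCount m k : ℝ) ^ 2
      = (m + 1) * (2 * (m + 1) ^ 2 + 1) := by
    exact_mod_cast three_mul_sum_repCount_sq m
  rw [integral_norm_dirich_sq_sq]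
  field_simp
  linear_combination hsum
end

section
/- For m ∈ ℕ and t, t' ∈ [0,1), one has |d_m(t')|·|d_m(t'−t)| ≤ (1/(2(m+1)))·min(1/w(t'−t), 1/w(t')) ≤ 1/((m+1)·w(t)), where w is the wrap-around distance, provided t, t', t'−t are all nonzero mod 1. -/
/-! Trivially `‖d_m(s)‖ ≤ 1`. Summing the geometric series with ratio `z = e^{2πis}` gives
`‖d_m(s)‖ ≤ 2 / ((m+1)‖z - 1‖) = 1 / ((m+1)|sin πs|)`, and Jordan's inequality
`|sin πs| ≥ 2 w(s)` turns this into `‖d_m(s)‖ ≤ 1 / (2(m+1) w(s))`. Bounding either factor of the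
product by `1` and the other by this estimate gives the first inequality; the second follows from
`w(t) ≤ w(t') + w(t' - t) ≤ 2 max (w(t'), w(t' - t))`. -/

open Real Matrix MeasureTheory

lemma wrap_le (x : ℝ) (r : ℤ) : wrap x ≤ |x + r| :=
  ciInf_le ⟨0, by rintro _ ⟨r, rfl⟩; positivity⟩ r

lemma wrap_nonneg (x : ℝ) : 0 ≤ wrap x := le_ciInf fun _ => abs_nonneg _

lemma wrap_sub_le (a b : ℝ) : wrap (a - b) ≤ wrap a + wrap b :=
  le_ciInf_add_ciInf fun ra rb => (wrap_le _ (ra - rb)).trans <| by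
    push_cast
    simpa only [show a - b + (ra - rb) = (a + ra) - (b + rb) by ring] using abs_sub _ _

lemma wrap_le_abs_sub_round (x : ℝ) : wrap x ≤ |x - round x| := by
  simpa [sub_eq_add_neg] using wrap_le x (-round x)

lemma two_mul_wrap_le_abs_sin (s : ℝ) : 2 * wrap s ≤ |sin (π * s)| := by
  set x := s - round s
  have hperiodic : |sin (π * s)| = |sin (π * x)| := by
    rw [show π * s = π * x + round s * π by ring, sin_add_int_mul_pi, abs_mul, abs_neg_one_zpow,
      one_mul]
  have hx : |π * x| ≤ π / 2 := by
    rw [abs_mul, abs_of_pos pi_pos]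
    nlinarith [abs_sub_round s, pi_pos]
  have hjordan := mul_abs_le_abs_sin hx
  rw [abs_mul, abs_of_pos pi_pos, ← mul_assoc, div_mul_cancel₀ _ pi_ne_zero] at hjordan
  rw [hperiodic]
  nlinarith [wrap_le_abs_sub_round s]

lemma norm_geom_sum_le_of_norm_eq_one {K : Type*} [NormedDivisionRing K] {z : K} (hz : ‖z‖ = 1) (hz1 : z ≠ 1) (n : ℕ) :
    ‖∑ k ∈ Finset.range n, z ^ k‖ ≤ 2 / ‖z - 1‖ := by
  rw [geom_sum_eq hz1, norm_div]
  gcongr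
  calc ‖z ^ n - 1‖ ≤ ‖z ^ n‖ + ‖(1 : K)‖ := norm_sub_le _ _
    _ = 2 := by rw [norm_pow, hz, one_pow, norm_one]; norm_num

lemma dirich_eq_geom_sum (m : ℕ) (s : ℝ) :
    dirich m s = ((m : ℂ) + 1)⁻¹ *
      ∑ k ∈ Finset.range (m + 1), Complex.exp (Complex.I * (2 * π * s : ℝ)) ^ k := by
  simp only [dirich, ← Complex.exp_nat_mul]
  congr! 3
  push_cast
  ring

lemma norm_inv_natCast_add_one (m : ℕ) : ‖((m : ℂ) + 1)⁻¹‖ = 1 / ((m : ℝ) + 1) := by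
  rw [norm_inv, one_div]
  norm_cast

lemma norm_dirich_le_one (m : ℕ) (s : ℝ) : ‖dirich m s‖ ≤ 1 := by
  rw [dirich_eq_geom_sum, norm_mul, norm_inv_natCast_add_one, one_div_mul_eq_div,
    div_le_one (by positivity)]
  refine (norm_sum_le _ _).trans_eq ?_
  simp only [norm_pow, Complex.norm_exp_I_mul_ofReal, one_pow, Finset.sum_const,
    Finset.card_range, nsmul_eq_mul, mul_one, Nat.cast_add_one]

lemma norm_dirich_le_inv_wrap (m : ℕ) {s : ℝ} (hs : wrap s ≠ 0) :
    ‖dirich m s‖ ≤ 1 / (2 * ((m : ℝ) + 1)) * (1 / wrap s) := by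
  have hw : 0 < wrap s := (wrap_nonneg s).lt_of_ne' hs
  set z := Complex.exp (Complex.I * (2 * π * s : ℝ))
  have hz : ‖z‖ = 1 := Complex.norm_exp_I_mul_ofReal _
  have hz1 : 4 * wrap s ≤ ‖z - 1‖ := by
    rw [Complex.norm_exp_I_mul_ofReal_sub_one, norm_mul, Real.norm_two, Real.norm_eq_abs,
      show 2 * π * s / 2 = π * s by ring]
    linarith [two_mul_wrap_le_abs_sin s]
  have hsum := norm_geom_sum_le_of_norm_eq_one hz
    (fun h => by rw [h, sub_self, norm_zero] at hz1; linarith) (m + 1)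
  rw [dirich_eq_geom_sum, norm_mul, norm_inv_natCast_add_one]
  calc 1 / ((m : ℝ) + 1) * ‖∑ k ∈ Finset.range (m + 1), z ^ k‖
      ≤ 1 / ((m : ℝ) + 1) * (2 / (4 * wrap s)) := by
        gcongr
        exact hsum.trans (by gcongr)
    _ = 1 / (2 * ((m : ℝ) + 1)) * (1 / wrap s) := by field_simp; ring

lemma min_one_div_le_two_div {a b c : ℝ} (ha : 0 < a) (hb : 0 < b) (hc : 0 < c)
    (h : c ≤ a + b) : min (1 / a) (1 / b) ≤ 2 / c := by
  rcases le_total a b with hab | hab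
  · exact min_le_of_right_le <| by rw [div_le_div_iff₀ hb hc]; linarith
  · exact min_le_of_left_le <| by rw [div_le_div_iff₀ ha hc]; linarith

theorem stmt9_general (m : ℕ) (t t' : ℝ)
    (h1 : wrap t ≠ 0) (h2 : wrap t' ≠ 0) (h3 : wrap (t' - t) ≠ 0) :
    ‖dirich m t'‖ * ‖dirich m (t' - t)‖
      ≤ 1 / (2 * ((m : ℝ) + 1)) * min (1 / wrap (t' - t)) (1 / wrap t') ∧
    1 / (2 * ((m : ℝ) + 1)) * min (1 / wrap (t' - t)) (1 / wrap t')
      ≤ 1 / (((m : ℝ) + 1) * wrap t) := by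
  have hc : 0 ≤ 1 / (2 * ((m : ℝ) + 1)) := by positivity
  constructor
  · rw [mul_min_of_nonneg _ _ hc]
    refine le_min ?_ ?_
    · simpa only [one_mul] using mul_le_mul (norm_dirich_le_one m t')
        (norm_dirich_le_inv_wrap m h3) (norm_nonneg _) zero_le_one
    · simpa only [mul_one] using mul_le_mul (norm_dirich_le_inv_wrap m h2)
        (norm_dirich_le_one m _) (norm_nonneg _)
        (mul_nonneg hc (one_div_nonneg.2 (wrap_nonneg _)))
  · have htri : wrap t ≤ wrap (t' - t) + wrap t' := by
      simpa only [sub_sub_cancel, add_comm] using wrap_sub_le t' (t' - t)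
    calc _ ≤ 1 / (2 * ((m : ℝ) + 1)) * (2 / wrap t) := by
          gcongr
          exact min_one_div_le_two_div ((wrap_nonneg _).lt_of_ne' h3)
            ((wrap_nonneg _).lt_of_ne' h2) ((wrap_nonneg _).lt_of_ne' h1) htri
      _ = 1 / (((m : ℝ) + 1) * wrap t) := by field_simp

theorem stmt9 (m : ℕ) (t t' : ℝ) (ht : t ∈ Set.Ico (0:ℝ) 1) (ht' : t' ∈ Set.Ico (0:ℝ) 1)
    (h1 : wrap t ≠ 0) (h2 : wrap t' ≠ 0) (h3 : wrap (t' - t) ≠ 0) :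
    ‖dirich m t'‖ * ‖dirich m (t' - t)‖
      ≤ 1 / (2 * ((m : ℝ) + 1)) * min (1 / wrap (t' - t)) (1 / wrap t') ∧
    1 / (2 * ((m : ℝ) + 1)) * min (1 / wrap (t' - t)) (1 / wrap t')
      ≤ 1 / (((m : ℝ) + 1) * wrap t) :=
  stmt9_general m t t' h1 h2 h3
end

section
/- For x ∈ [0,1] and integer m ≥ 4, one has sin(πx)/((m+1)·sin(πx/(m+1))) ≤ exp(−π²((m+1)²−1)x²/(6(m+1)²)) ≤ exp(−4π²x²/25). -/
open Real Matrix MeasureTheory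

/-!
Euler's product `sin (π x) = π x ∏ (1 - x² / k²)` lets us compare `sin (π x)` with
`N sin (π x / N)` factor by factor: with `a = x² / k²`, each factor satisfies
`1 - a ≤ (1 - a / N²) exp (-(1 - 1 / N²) a)`, and `∑ 1 / k² = π² / 6`.
-/

open Filter Topology Finset

lemma one_sub_le_one_sub_mul_exp {a b : ℝ} (hb : 0 ≤ b) (hba : b ≤ a) :
    1 - a ≤ (1 - b) * exp (-(a - b)) := by
  have hexp := one_sub_le_exp_neg (a - b)
  have hexp_le_one : exp (-(a - b)) ≤ 1 := exp_le_one_iff.mpr (by linarith)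
  nlinarith

lemma prod_one_sub_le_prod_one_sub_mul_exp {ι : Type*} (s : Finset ι) {a b : ι → ℝ}
    (hb : ∀ i ∈ s, 0 ≤ b i) (hba : ∀ i ∈ s, b i ≤ a i) (ha : ∀ i ∈ s, a i ≤ 1) :
    ∏ i ∈ s, (1 - a i) ≤ (∏ i ∈ s, (1 - b i)) * exp (-∑ i ∈ s, (a i - b i)) := by
  rw [← sum_neg_distrib, exp_sum, ← prod_mul_distrib]
  exact prod_le_prod (fun i hi => sub_nonneg.mpr (ha i hi))
    (fun i hi => one_sub_le_one_sub_mul_exp (hb i hi) (hba i hi))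

lemma tendsto_sum_range_one_div_succ_sq :
    Tendsto (fun n : ℕ => ∑ j ∈ range n, 1 / ((j : ℝ) + 1) ^ 2) atTop (𝓝 (π ^ 2 / 6)) := by
  have h := (hasSum_nat_add_iff' 1).mpr hasSum_zeta_two
  simpa using h.tendsto_sum_nat

theorem sin_pi_mul_le_mul_sin_pi_mul_div_mul_exp {N x : ℝ} (hN : 1 ≤ N) (hx0 : 0 ≤ x)
    (hx1 : x ≤ 1) :
    sin (π * x) ≤ N * sin (π * (x / N)) * exp (-(x ^ 2 * (1 - 1 / N ^ 2)) * (π ^ 2 / 6)) := by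
  have hN0 : N ≠ 0 := by positivity
  have hQ := (tendsto_euler_sin_prod (x / N)).const_mul N
  have hE := (continuous_exp.tendsto _).comp
    (tendsto_sum_range_one_div_succ_sq.const_mul (-(x ^ 2 * (1 - 1 / N ^ 2))))
  refine le_of_tendsto_of_tendsto' (tendsto_euler_sin_prod x) (hQ.mul hE) fun n => ?_
  have hprod := prod_one_sub_le_prod_one_sub_mul_exp (range n)
    (a := fun j : ℕ => x ^ 2 / ((j : ℝ) + 1) ^ 2) (b := fun j : ℕ => (x / N) ^ 2 / ((j : ℝ) + 1) ^ 2)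
    (fun j _ => by positivity)
    (fun j _ => by
      gcongr
      exact div_le_self hx0 hN)
    (fun j _ => by
      rw [div_le_one (by positivity)]
      nlinarith [(j.cast_nonneg : (0 : ℝ) ≤ j)])
  have hsum : ∑ j ∈ range n, (x ^ 2 / ((j : ℝ) + 1) ^ 2 - (x / N) ^ 2 / ((j : ℝ) + 1) ^ 2)
      = x ^ 2 * (1 - 1 / N ^ 2) * ∑ j ∈ range n, 1 / ((j : ℝ) + 1) ^ 2 := by
    rw [mul_sum]
    refine sum_congr rfl fun j _ => ?_
    field_simp
  rw [hsum] at hprod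
  have hπx : N * (π * (x / N)) = π * x := by field_simp
  calc π * x * ∏ j ∈ range n, (1 - x ^ 2 / ((j : ℝ) + 1) ^ 2)
      ≤ π * x * ((∏ j ∈ range n, (1 - (x / N) ^ 2 / ((j : ℝ) + 1) ^ 2))
          * exp (-(x ^ 2 * (1 - 1 / N ^ 2) * ∑ j ∈ range n, 1 / ((j : ℝ) + 1) ^ 2))) :=
        mul_le_mul_of_nonneg_left hprod (by positivity)
    _ = _ := by
        simp only [Function.comp_apply, ← hπx, neg_mul]
        ring

theorem stmt12 (m : ℕ) (hm : 4 ≤ m) (x : ℝ) (hx : x ∈ Set.Icc (0:ℝ) 1) :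
    Real.sin (π * x) / (((m : ℝ) + 1) * Real.sin (π * x / ((m : ℝ) + 1)))
      ≤ Real.exp (-(π ^ 2 * (((m : ℝ) + 1) ^ 2 - 1) * x ^ 2) / (6 * ((m : ℝ) + 1) ^ 2)) ∧
    Real.exp (-(π ^ 2 * (((m : ℝ) + 1) ^ 2 - 1) * x ^ 2) / (6 * ((m : ℝ) + 1) ^ 2))
      ≤ Real.exp (-(4 * π ^ 2 * x ^ 2) / 25) := by
  obtain ⟨hx0, hx1⟩ := hx
  set N : ℝ := (m : ℝ) + 1
  have hN : (5 : ℝ) ≤ N := by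
    have : (4 : ℝ) ≤ m := by exact_mod_cast hm
    linarith
  constructor
  · have hsin := sin_pi_mul_le_mul_sin_pi_mul_div_mul_exp (by linarith : (1 : ℝ) ≤ N) hx0 hx1
    have hexponent : -(x ^ 2 * (1 - 1 / N ^ 2)) * (π ^ 2 / 6)
        = -(π ^ 2 * (N ^ 2 - 1) * x ^ 2) / (6 * N ^ 2) := by
      field_simp
    rw [hexponent, ← mul_div_assoc] at hsin
    refine div_le_of_le_mul₀ ?_ (exp_pos _).le (by linarith)
    refine mul_nonneg (by positivity) (sin_nonneg_of_nonneg_of_le_pi (by positivity) ?_)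
    rw [div_le_iff₀ (by positivity)]
    nlinarith [pi_pos]
  · rw [exp_le_exp, div_le_div_iff₀ (by positivity) (by norm_num)]
    have hN2 : (25 : ℝ) ≤ N ^ 2 := by nlinarith
    nlinarith [mul_nonneg (by positivity : 0 ≤ π ^ 2 * x ^ 2) (sub_nonneg.mpr hN2)]
end

section
/- For λ ≥ 1, one has (⌊(λ−1)/2⌋!·⌈(λ−1)/2⌉!)^{-1} ≤ Γ((λ+1)/2)^{-2} ≤ (2e)^{λ−1}/λ^λ, so that the maximal cluster complexity of λ equispaced nodes with normalized separation τ satisfies C = τ^{1−λ}·(⌊(λ−1)/2⌋!·⌈(λ−1)/2⌉!)^{-1} ≤ (2e)^{λ−1}·τ^{1−λ}/λ^λ. -/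
open Real Matrix MeasureTheory

/-!
The lower bound is log-convexity of `Γ`: with `a = ⌊(λ-1)/2⌋`, `b = ⌈(λ-1)/2⌉`, the point
`(λ+1)/2` is the midpoint of `a + 1` and `b + 1`, so `Γ((λ+1)/2)² ≤ Γ(a+1) Γ(b+1) = a! b!`.

For the upper bound, `f λ = Γ((λ+1)/2)² (2e)^(λ-1) / λ^λ` satisfies `f 1 = 1`, `f 2 = πe/8 > 1`,
and, by `Γ(x+1) = x Γ(x)`, `f (λ+2) / f λ = e² (λ+1)² λ^λ / (λ+2)^(λ+2) ≥ 1`. Taking logarithms,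
the latter is `∫ x in λ..λ+2, log x ≤ 2 log (λ+1)`, the midpoint inequality for the concave `log`.
-/

namespace Real

theorem Gamma_midpoint_sq_le {s t : ℝ} (hs : 0 < s) (ht : 0 < t) :
    Gamma ((s + t) / 2) ^ 2 ≤ Gamma s * Gamma t := by
  have h := Gamma_mul_add_mul_le_rpow_Gamma_mul_rpow_Gamma hs ht one_half_pos one_half_pos
    (add_halves 1)
  rw [← sqrt_eq_rpow, ← sqrt_eq_rpow, ← sqrt_mul (Gamma_pos_of_pos hs).le] at h
  calc Gamma ((s + t) / 2) ^ 2 ≤ √(Gamma s * Gamma t) ^ 2 := by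
        gcongr
        rwa [show (s + t) / 2 = 1 / 2 * s + 1 / 2 * t by ring]
    _ = Gamma s * Gamma t := sq_sqrt (mul_pos (Gamma_pos_of_pos hs) (Gamma_pos_of_pos ht)).le

theorem Gamma_sq_le_factorial_mul_factorial (a b : ℕ) :
    Gamma ((a + b) / 2 + 1) ^ 2 ≤ a.factorial * b.factorial := by
  rw [← Gamma_nat_eq_factorial, ← Gamma_nat_eq_factorial]
  convert Gamma_midpoint_sq_le (s := a + 1) (t := b + 1) (by positivity) (by positivity) using 3
  ring

/- The left side minus `2 * h` is `∫ x in c - h..c + h, log x`; integrate the tangent line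
bound `log x ≤ log c + x / c - 1` of the concave `log`. -/
theorem mul_log_add_sub_mul_log_sub_le {c h : ℝ} (hh : 0 ≤ h) (hc : h < c) :
    (c + h) * log (c + h) - (c - h) * log (c - h) ≤ 2 * h * (log c + 1) := by
  have hc0 : 0 < c := hh.trans_lt hc
  have tangent : ∀ x ∈ Set.Icc (c - h) (c + h), log x ≤ log c + x / c - 1 := fun x hx => by
    have hx : 0 < x := by linarith [hx.1]
    have := log_le_sub_one_of_pos (div_pos hx hc0)
    rw [log_div hx.ne' hc0.ne'] at this
    linarith
  have hint := intervalIntegral.integral_mono_on (by linarith)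
    intervalIntegral.intervalIntegrable_log'
    ((by fun_prop : Continuous fun x => log c + x / c - 1).intervalIntegrable _ _) tangent
  rw [integral_log, intervalIntegral.integral_sub, intervalIntegral.integral_add,
    intervalIntegral.integral_div, integral_id] at hint
  · simp only [intervalIntegral.integral_const, smul_eq_mul] at hint
    field_simp at hint
    nlinarith
  all_goals apply Continuous.intervalIntegrable; fun_prop

theorem add_three_pow_le_exp_two_mul (n : ℕ) :
    ((n : ℝ) + 3) ^ (n + 3) ≤ exp 2 * ((n : ℝ) + 2) ^ 2 * ((n : ℝ) + 1) ^ (n + 1) := by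
  have h := mul_log_add_sub_mul_log_sub_le (c := n + 2) zero_le_one
    (by linarith [n.cast_nonneg (α := ℝ)])
  rw [show (n : ℝ) + 2 + 1 = n + 3 by ring, show (n : ℝ) + 2 - 1 = n + 1 by ring] at h
  rw [← log_le_log_iff (by positivity) (by positivity), log_mul (by positivity) (by positivity),
    log_mul (by positivity) (by positivity), log_exp, log_pow, log_pow, log_pow]
  push_cast
  linarith

theorem succ_pow_le_Gamma_sq_mul (n : ℕ) :
    ((n : ℝ) + 1) ^ (n + 1) ≤ Gamma (n / 2 + 1) ^ 2 * (2 * exp 1) ^ n := by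
  induction n using Nat.twoStepInduction with
  | zero => simp
  | one =>
    have hΓ : Gamma (3 / 2) = √π / 2 := by
      rw [show (3 : ℝ) / 2 = 1 / 2 + 1 by norm_num, Gamma_add_one one_half_pos.ne',
        Gamma_one_half_eq]
      ring
    norm_num [hΓ, div_pow, sq_sqrt pi_pos.le]
    nlinarith [pi_gt_d2, exp_one_gt_d9]
  | more n ih _ =>
    have hΓ : Gamma (((n + 2 : ℕ) : ℝ) / 2 + 1) = (n / 2 + 1) * Gamma (n / 2 + 1) := by
      rw [← Gamma_add_one (by positivity)]; push_cast; ring_nf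
    rw [hΓ]
    calc (((n + 2 : ℕ) : ℝ) + 1) ^ (n + 2 + 1)
        = ((n : ℝ) + 3) ^ (n + 3) := by push_cast; ring
      _ ≤ exp 2 * ((n : ℝ) + 2) ^ 2 * ((n : ℝ) + 1) ^ (n + 1) := add_three_pow_le_exp_two_mul n
      _ ≤ exp 2 * ((n : ℝ) + 2) ^ 2 * (Gamma (n / 2 + 1) ^ 2 * (2 * exp 1) ^ n) := by gcongr
      _ = ((n / 2 + 1) * Gamma (n / 2 + 1)) ^ 2 * (2 * exp 1) ^ (n + 2) := by
        rw [show (2 : ℝ) = 1 + 1 by norm_num, exp_add]; ring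

end Real

theorem stmt13 (lam : ℕ) (hlam : 1 ≤ lam) :
    ((((lam - 1) / 2).factorial * (lam / 2).factorial : ℕ) : ℝ)⁻¹
        ≤ ((Real.Gamma (((lam : ℝ) + 1) / 2)) ^ 2)⁻¹ ∧
    ((Real.Gamma (((lam : ℝ) + 1) / 2)) ^ 2)⁻¹
        ≤ (2 * Real.exp 1) ^ (lam - 1) / (lam : ℝ) ^ lam ∧
    ∀ τ : ℝ, 0 < τ →
      (1 / τ) ^ (lam - 1) * ((((lam - 1) / 2).factorial * (lam / 2).factorial : ℕ) : ℝ)⁻¹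
        ≤ (2 * Real.exp 1) ^ (lam - 1) * (1 / τ) ^ (lam - 1) / (lam : ℝ) ^ lam := by
  obtain ⟨n, rfl⟩ := Nat.exists_eq_add_of_le' hlam
  have hmid : (((n + 1 : ℕ) : ℝ) + 1) / 2 = ((n / 2 : ℕ) + ((n + 1) / 2 : ℕ) : ℝ) / 2 + 1 := by
    rw [← Nat.cast_add, show n / 2 + (n + 1) / 2 = n by omega]; push_cast; ring
  have hΓ : 0 < Gamma ((((n + 1 : ℕ) : ℝ) + 1) / 2) ^ 2 := by positivity
  have lower : ((((n + 1 - 1) / 2).factorial * ((n + 1) / 2).factorial : ℕ) : ℝ)⁻¹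
      ≤ (Gamma ((((n + 1 : ℕ) : ℝ) + 1) / 2) ^ 2)⁻¹ := by
    refine inv_anti₀ hΓ ?_
    rw [hmid, Nat.add_sub_cancel, Nat.cast_mul]
    exact Gamma_sq_le_factorial_mul_factorial _ _
  have upper : (Gamma ((((n + 1 : ℕ) : ℝ) + 1) / 2) ^ 2)⁻¹
      ≤ (2 * exp 1) ^ (n + 1 - 1) / ((n + 1 : ℕ) : ℝ) ^ (n + 1) := by
    rw [le_div_iff₀ (by positivity), inv_mul_le_iff₀ hΓ, Nat.add_sub_cancel,
      show (((n + 1 : ℕ) : ℝ) + 1) / 2 = n / 2 + 1 by push_cast; ring]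
    exact_mod_cast succ_pow_le_Gamma_sq_mul n
  refine ⟨lower, upper, fun τ hτ => ?_⟩
  calc (1 / τ) ^ (n + 1 - 1) * ((((n + 1 - 1) / 2).factorial * ((n + 1) / 2).factorial : ℕ) : ℝ)⁻¹
      ≤ (1 / τ) ^ (n + 1 - 1) * ((2 * exp 1) ^ (n + 1 - 1) / ((n + 1 : ℕ) : ℝ) ^ (n + 1)) := by
        gcongr; exact lower.trans upper
    _ = _ := by ring
end

section
/- For m ≥ 1 and t ∈ (0,1), one has |d_m(s)| ≥ 1 − π²(m+1)²·w(s)²/6 for w(s) ≤ 1/(m+1), where d_m is the modified Dirichlet kernel and w the wrap-around distance. -/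
open Real Matrix MeasureTheory

/-!
Rotating `d_m(u)` by the unit phase `e^{-πimu}` centres its frequencies at `k - m/2`, so
`|d_m(u)|` dominates the average of `cos (π (2k - m) u)`; `cos x ≥ 1 - x²/2` and
`∑ₖ (2k - m)² = m(m+1)(m+2)/3` turn this into `1 - π² m (m+2) u² / 6`. Since `d_m` is 1-periodic,
`u` may be replaced by `s - round s`, whose absolute value is the wrap-around distance of `s`.
-/

open Finset

lemma wrap_eq_abs_sub_round (x : ℝ) : wrap x = |x - round x| := by
  rw [wrap]
  refine le_antisymm ?_ (le_ciInf fun r => ?_)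
  · have hbdd : BddBelow (Set.range fun r : ℤ => |x + (r : ℝ)|) :=
      ⟨0, fun _ ⟨_, hr⟩ => hr ▸ abs_nonneg _⟩
    simpa [sub_eq_add_neg] using ciInf_le hbdd (-round x)
  · simpa [sub_eq_add_neg] using round_le x (-r)

lemma dirich_periodic (m : ℕ) : Function.Periodic (dirich m) 1 := fun t => by
  unfold dirich
  congr 1
  refine sum_congr rfl fun k _ => ?_
  have hk : Complex.exp (2 * π * Complex.I * k) = 1 := by
    rw [mul_comm]; exact Complex.exp_nat_mul_two_pi_mul_I k
  rw [Complex.ofReal_add, Complex.ofReal_one, mul_add, mul_one, Complex.exp_add, hk, mul_one]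

lemma sum_range_cast_id (n : ℕ) : ∑ k ∈ range n, (k : ℝ) = n * (n - 1) / 2 := by
  induction n with
  | zero => simp
  | succ n ih => rw [sum_range_succ, ih]; push_cast; ring

lemma sum_range_cast_sq (n : ℕ) :
    ∑ k ∈ range n, (k : ℝ) ^ 2 = n * (n - 1) * (2 * n - 1) / 6 := by
  induction n with
  | zero => simp
  | succ n ih => rw [sum_range_succ, ih]; push_cast; ring

lemma sum_range_succ_sq_two_mul_sub (m : ℕ) :
    ∑ k ∈ range (m + 1), (2 * (k : ℝ) - m) ^ 2 = (m : ℝ) * (m + 1) * (m + 2) / 3 := by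
  have hexpand : ∀ k : ℕ, (2 * (k : ℝ) - m) ^ 2 = 4 * (k : ℝ) ^ 2 - 4 * m * k + m ^ 2 :=
    fun k => by ring
  simp only [hexpand, sum_add_distrib, sum_sub_distrib, ← mul_sum, sum_range_cast_sq,
    sum_range_cast_id, sum_const, card_range, nsmul_eq_mul]
  push_cast
  ring

lemma one_sub_le_avg_cos (m : ℕ) (u : ℝ) :
    1 - π ^ 2 * m * (m + 2) * u ^ 2 / 6 ≤
      ((m : ℝ) + 1)⁻¹ * ∑ k ∈ range (m + 1), cos (π * (2 * k - m) * u) := by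
  have hsum : ∑ k ∈ range (m + 1), (1 - (π * (2 * k - m) * u) ^ 2 / 2)
      = (m + 1) - (π * u) ^ 2 / 2 * (m * (m + 1) * (m + 2) / 3) := by
    rw [← sum_range_succ_sq_two_mul_sub, mul_sum, sum_sub_distrib, sum_const, card_range]
    simp only [nsmul_eq_mul, mul_one, Nat.cast_add, Nat.cast_one]
    congr 1
    exact sum_congr rfl fun k _ => by ring
  have hcos := sum_le_sum fun k (_ : k ∈ range (m + 1)) =>
    one_sub_sq_div_two_le_cos (x := π * (2 * k - m) * u)
  rw [hsum] at hcos
  calc 1 - π ^ 2 * m * (m + 2) * u ^ 2 / 6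
      = ((m : ℝ) + 1)⁻¹ * ((m + 1) - (π * u) ^ 2 / 2 * (m * (m + 1) * (m + 2) / 3)) := by
        field_simp
        ring
    _ ≤ _ := by gcongr

lemma avg_cos_le_norm_dirich (m : ℕ) (u : ℝ) :
    ((m : ℝ) + 1)⁻¹ * ∑ k ∈ range (m + 1), cos (π * (2 * k - m) * u) ≤ ‖dirich m u‖ := by
  have hrot : Complex.exp (↑(-(π * m * u)) * Complex.I) * dirich m u
      = ((((m : ℝ) + 1)⁻¹ : ℝ) : ℂ) *
        ∑ k ∈ range (m + 1), Complex.exp (↑(π * (2 * k - m) * u) * Complex.I) := by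
    rw [dirich, mul_left_comm, mul_sum]
    push_cast
    congr 1
    refine sum_congr rfl fun k _ => ?_
    rw [← Complex.exp_add]
    ring_nf
  calc ((m : ℝ) + 1)⁻¹ * ∑ k ∈ range (m + 1), cos (π * (2 * k - m) * u)
      = (Complex.exp (↑(-(π * m * u)) * Complex.I) * dirich m u).re := by
        simp only [hrot, Complex.re_ofReal_mul, Complex.re_sum, Complex.exp_ofReal_mul_I_re]
    _ ≤ ‖Complex.exp (↑(-(π * m * u)) * Complex.I) * dirich m u‖ := Complex.re_le_norm _
    _ = ‖dirich m u‖ := by rw [norm_mul, Complex.norm_exp_ofReal_mul_I, one_mul]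

lemma one_sub_le_norm_dirich (m : ℕ) (u : ℝ) :
    1 - π ^ 2 * ((m : ℝ) + 1) ^ 2 * u ^ 2 / 6 ≤ ‖dirich m u‖ := by
  refine le_trans ?_ ((one_sub_le_avg_cos m u).trans (avg_cos_le_norm_dirich m u))
  nlinarith [mul_nonneg (sq_nonneg π) (sq_nonneg u)]

theorem stmt16_general (m : ℕ) (s : ℝ) :
    ‖dirich m s‖ ≥ 1 - π ^ 2 * ((m : ℝ) + 1) ^ 2 * wrap s ^ 2 / 6 := by
  have hshift : dirich m (s - round s) = dirich m s := by
    simpa using (dirich_periodic m).sub_int_mul_eq (round s)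
  rw [wrap_eq_abs_sub_round, sq_abs, ← hshift]
  exact one_sub_le_norm_dirich m _

theorem stmt16 (m : ℕ) (hm : 1 ≤ m) (s : ℝ) (hs : s ∈ Set.Ioo (0:ℝ) 1)
    (hw : wrap s ≤ 1 / ((m : ℝ) + 1)) :
    ‖dirich m s‖ ≥ 1 - π ^ 2 * ((m : ℝ) + 1) ^ 2 * wrap s ^ 2 / 6 :=
  stmt16_general m s
end

section
/- Let Ω ⊂ [0,1)^d be a clustered node configuration with L clusters, largest cluster size λ, and normalized cluster separation ρ > 1 with respect to bandwidth N. Then for each node t_j ∈ Ω and each integer m ≥ 1, the number of nodes t' ∈ Ω with mρ ≤ N·w_∞(t_j − t') < (m+1)ρ is at most 2^d(2^d − 1)·m^{d−1}·λ, where w_∞ is the wrap-around max-norm distance. -/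
open Real Matrix MeasureTheory

/-!
Replace each difference `t j - t k` by its representative modulo `ℤ^d` of least sup norm and
rescale by `N / ρ`, so that nodes of different clusters are at sup distance at least `1`. Tile space
by unit lattice cells: a cell has sup diameter `< 1`, so it meets at most one cluster and holds at
most `λ` nodes. The nodes of the shell `m ≤ ‖x‖ < m + 1` lie in the `(2m + 2)^d - (2m)^d` cells of
the box of side `2m + 2` not in the box of side `2m`, and
`(m + 1)^d ≤ m^d + (2^d - 1) m^(d - 1)` by the binomial theorem.
-/

open Finset

lemma wrap_le_abs (x : ℝ) : wrap x ≤ |x| := by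
  simpa [wrap_eq_abs_sub_round] using round_le x 0

lemma wrap_add_intCast (x : ℝ) (n : ℤ) : wrap (x + n) = wrap x := by
  simp only [wrap_eq_abs_sub_round, round_add_intCast, Int.cast_add, add_sub_add_right_eq_sub]

lemma iSup_wrap_le_norm {ι : Type*} [Fintype ι] (x : ι → ℝ) : ⨆ i, wrap (x i) ≤ ‖x‖ :=
  Real.iSup_le (fun i => (wrap_le_abs _).trans (norm_le_pi_norm x i)) (norm_nonneg _)

lemma iSup_wrap_eq_norm {ι : Type*} [Fintype ι] (x : ι → ℝ) :
    ⨆ i, wrap (x i) = ‖fun i => x i - round (x i)‖ := by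
  refine le_antisymm ?_ ((pi_norm_le_iff_of_nonneg ?_).2 fun i => ?_)
  · refine Real.iSup_le (fun i => ?_) (norm_nonneg _)
    rw [wrap_eq_abs_sub_round]
    exact norm_le_pi_norm (fun i => x i - round (x i)) i
  · exact Real.iSup_nonneg fun i => by rw [wrap_eq_abs_sub_round]; positivity
  · rw [Real.norm_eq_abs, ← wrap_eq_abs_sub_round]
    exact le_ciSup (f := fun i => wrap (x i)) (Finite.bddAbove_range _) i

/-- Index of the unit cell containing `x`: the cells are `[k, k + 1)` for `k ≥ 0` and `(k, k + 1]`
for `k < 0`, so that the cells with index in `[-n, n - 1]` tile exactly the interval `(-n, n)`. -/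
noncomputable def cell (x : ℝ) : ℤ := if 0 ≤ x then ⌊x⌋ else -⌊-x⌋ - 1

lemma floor_lt_natCast_iff {x : ℝ} {n : ℕ} : ⌊x⌋ < n ↔ x < n := by
  exact_mod_cast Int.floor_lt (z := n)

lemma cell_mem_Icc_iff {x : ℝ} (n : ℕ) : cell x ∈ Icc (-(n : ℤ)) (n - 1) ↔ |x| < n := by
  rw [mem_Icc, cell]
  split_ifs with hx
  · have := Int.floor_nonneg.2 hx
    rw [abs_of_nonneg hx, ← floor_lt_natCast_iff]
    omega
  · have := Int.floor_nonneg.2 (neg_nonneg.2 (not_le.1 hx).le)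
    rw [abs_of_neg (not_le.1 hx), ← floor_lt_natCast_iff]
    omega

lemma abs_sub_lt_one_of_cell_eq {x y : ℝ} (h : cell x = cell y) : |x - y| < 1 := by
  unfold cell at h
  split_ifs at h with hx hy hy
  · exact Int.abs_sub_lt_one_of_floor_eq_floor h
  · have := Int.floor_nonneg.2 hx
    have := Int.floor_nonneg.2 (neg_nonneg.2 (not_le.1 hy).le)
    omega
  · have := Int.floor_nonneg.2 hy
    have := Int.floor_nonneg.2 (neg_nonneg.2 (not_le.1 hx).le)
    omega
  · rw [abs_sub_comm]
    simpa [sub_eq_add_neg, add_comm] using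
      Int.abs_sub_lt_one_of_floor_eq_floor (show ⌊-x⌋ = ⌊-y⌋ by omega)

lemma norm_sub_lt_one_of_comp_cell_eq {ι : Type*} [Fintype ι] {x y : ι → ℝ}
    (h : cell ∘ x = cell ∘ y) : ‖x - y‖ < 1 :=
  (pi_norm_lt_iff one_pos).2 fun i => abs_sub_lt_one_of_cell_eq (congrFun h i)

lemma add_one_pow_le {m : ℕ} (hm : 1 ≤ m) (d : ℕ) :
    (m + 1) ^ d ≤ m ^ d + (2 ^ d - 1) * m ^ (d - 1) := by
  have hchoose : ∑ i ∈ range d, d.choose i = 2 ^ d - 1 := by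
    rw [← Nat.sum_range_choose, sum_range_succ, Nat.choose_self, Nat.add_sub_cancel]
  calc (m + 1) ^ d = ∑ i ∈ range d, m ^ i * d.choose i + m ^ d := by
        simp [add_pow, sum_range_succ]
    _ ≤ ∑ i ∈ range d, m ^ (d - 1) * d.choose i + m ^ d := by
        gcongr with i hi
        exact Nat.le_sub_one_of_lt (mem_range.1 hi)
    _ = m ^ d + (2 ^ d - 1) * m ^ (d - 1) := by rw [← mul_sum, hchoose]; ring

section Lattice

variable {ι : Type*} [Fintype ι] [DecidableEq ι]

variable (ι) in
noncomputable def latticeBox (n : ℕ) : Finset (ι → ℤ) :=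
  Fintype.piFinset fun _ => Icc (-(n : ℤ)) (n - 1)

lemma comp_cell_mem_latticeBox_iff {x : ι → ℝ} {n : ℕ} (hn : 0 < n) :
    cell ∘ x ∈ latticeBox ι n ↔ ‖x‖ < n := by
  simp only [latticeBox, Fintype.mem_piFinset, pi_norm_lt_iff (Nat.cast_pos.2 hn),
    Real.norm_eq_abs, ← cell_mem_Icc_iff, Function.comp_apply]

lemma card_latticeBox (n : ℕ) : #(latticeBox ι n) = (2 * n) ^ Fintype.card ι := by
  simp only [latticeBox, Fintype.card_piFinset, Int.card_Icc, prod_const, card_univ]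
  congr
  omega

lemma latticeBox_subset_succ (n : ℕ) : latticeBox ι n ⊆ latticeBox ι (n + 1) :=
  Fintype.piFinset_subset _ _ fun _ => Icc_subset_Icc (by push_cast; omega) (by omega)

lemma card_latticeBox_succ_sdiff_le {m : ℕ} (hm : 1 ≤ m) :
    #(latticeBox ι (m + 1) \ latticeBox ι m) ≤
      2 ^ Fintype.card ι * (2 ^ Fintype.card ι - 1) * m ^ (Fintype.card ι - 1) := by
  set d := Fintype.card ι
  rw [card_sdiff_of_subset (latticeBox_subset_succ m), card_latticeBox, card_latticeBox, mul_pow,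
    mul_pow, tsub_le_iff_right]
  calc 2 ^ d * (m + 1) ^ d ≤ 2 ^ d * (m ^ d + (2 ^ d - 1) * m ^ (d - 1)) :=
        Nat.mul_le_mul_left _ (add_one_pow_le hm d)
    _ = 2 ^ d * (2 ^ d - 1) * m ^ (d - 1) + 2 ^ d * m ^ d := by ring

theorem ncard_shell_le_of_separated {α β : Type*} [Fintype α]
    (x : α → ι → ℝ) (cl : α → β) {lam m : ℕ} (hm : 1 ≤ m)
    (hsep : ∀ k k', cl k ≠ cl k' → 1 ≤ ‖x k - x k'‖)
    (hlam : ∀ b, {k | cl k = b}.ncard ≤ lam) :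
    {k | m ≤ ‖x k‖ ∧ ‖x k‖ < m + 1}.ncard ≤
      2 ^ Fintype.card ι * (2 ^ Fintype.card ι - 1) * m ^ (Fintype.card ι - 1) * lam := by
  classical
  set s := {k | m ≤ ‖x k‖ ∧ ‖x k‖ < m + 1}.toFinset
  set c : α → ι → ℤ := fun k => cell ∘ x k
  have hfiber : ∀ v ∈ s.image c, #{k ∈ s | c k = v} ≤ lam := by
    intro v hv
    obtain ⟨k₀, -, rfl⟩ := mem_image.1 hv
    refine le_trans ?_ (hlam (cl k₀))
    rw [← Set.ncard_coe_finset]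
    refine Set.ncard_le_ncard (fun k hk => ?_)
    rw [mem_coe, mem_filter] at hk
    exact not_not.1 fun hne => (hsep k k₀ hne).not_gt (norm_sub_lt_one_of_comp_cell_eq hk.2)
  have himage : s.image c ⊆ latticeBox ι (m + 1) \ latticeBox ι m := by
    intro v hv
    obtain ⟨k, hk, rfl⟩ := mem_image.1 hv
    rw [Set.mem_toFinset] at hk
    rw [mem_sdiff, comp_cell_mem_latticeBox_iff m.succ_pos, comp_cell_mem_latticeBox_iff hm, not_lt]
    push_cast
    exact ⟨hk.2, hk.1⟩
  rw [Set.ncard_eq_toFinset_card', mul_comm]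
  calc #s ≤ lam * #(s.image c) := card_le_mul_card_image s lam hfiber
    _ ≤ lam * #(latticeBox ι (m + 1) \ latticeBox ι m) := Nat.mul_le_mul_left _ (card_le_card himage)
    _ ≤ _ := Nat.mul_le_mul_left _ (card_latticeBox_succ_sdiff_le hm)

end Lattice

theorem stmt18_general (d N L M lam : ℕ) (hN : 0 < N) (ρ : ℝ) (hρ : 1 < ρ)
    (t : Fin M → Fin d → ℝ)
    (cl : Fin M → Fin L)
    (hsep : ∀ j k, cl j ≠ cl k → ρ / N ≤ ⨆ ℓ, wrap (t j ℓ - t k ℓ))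
    (hlam : ∀ l : Fin L, {j : Fin M | cl j = l}.ncard ≤ lam)
    (j : Fin M) (m : ℕ) (hm : 1 ≤ m) :
    {k : Fin M | (m : ℝ) * ρ ≤ (N : ℝ) * ⨆ ℓ, wrap (t j ℓ - t k ℓ) ∧
        (N : ℝ) * (⨆ ℓ, wrap (t j ℓ - t k ℓ)) < ((m : ℝ) + 1) * ρ}.ncard
      ≤ 2 ^ d * (2 ^ d - 1) * m ^ (d - 1) * lam := by
  have hρ₀ : 0 < ρ := one_pos.trans hρ
  have hN₀ : (0 : ℝ) < N := Nat.cast_pos.2 hN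
  set δ : Fin M → Fin d → ℝ := fun k ℓ => t j ℓ - t k ℓ - round (t j ℓ - t k ℓ)
  have hdist : ∀ k, ⨆ ℓ, wrap (t j ℓ - t k ℓ) = ‖δ k‖ := fun k => iSup_wrap_eq_norm _
  have hδsep : ∀ k k', cl k ≠ cl k' → ρ / N ≤ ‖δ k - δ k'‖ := fun k k' hne => by
    refine (hsep k' k hne.symm).trans ((iSup_congr fun ℓ => ?_).trans_le (iSup_wrap_le_norm _))
    have : t k' ℓ - t k ℓ =
        (δ k - δ k') ℓ + ((round (t j ℓ - t k ℓ) - round (t j ℓ - t k' ℓ) : ℤ) : ℝ) := by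
      simp only [δ, Pi.sub_apply, Int.cast_sub]; ring
    rw [this, wrap_add_intCast]
  have hscale : ∀ v : Fin d → ℝ, ‖(N / ρ) • v‖ = N * ‖v‖ / ρ := fun v => by
    rw [norm_smul, Real.norm_of_nonneg (by positivity), div_mul_eq_mul_div]
  have hshell : {k : Fin M | (m : ℝ) * ρ ≤ (N : ℝ) * ⨆ ℓ, wrap (t j ℓ - t k ℓ) ∧
      (N : ℝ) * (⨆ ℓ, wrap (t j ℓ - t k ℓ)) < ((m : ℝ) + 1) * ρ} =
      {k | m ≤ ‖(N / ρ) • δ k‖ ∧ ‖(N / ρ) • δ k‖ < m + 1} := by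
    ext k
    simp only [Set.mem_ofPred_eq, hdist, hscale, le_div_iff₀ hρ₀, div_lt_iff₀ hρ₀]
  have hxsep : ∀ k k', cl k ≠ cl k' → 1 ≤ ‖(N / ρ) • δ k - (N / ρ) • δ k'‖ := fun k k' hne => by
    rw [← smul_sub, hscale, le_div_iff₀ hρ₀, one_mul, ← div_le_iff₀' hN₀]
    exact hδsep k k' hne
  rw [hshell]
  simpa only [Fintype.card_fin] using ncard_shell_le_of_separated _ cl hm hxsep hlam

theorem stmt18 (d N L M lam : ℕ) (hd : 0 < d) (hN : 0 < N) (ρ : ℝ) (hρ : 1 < ρ)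
    (t : Fin M → Fin d → ℝ) (ht : ∀ j ℓ, t j ℓ ∈ Set.Ico (0:ℝ) 1)
    (cl : Fin M → Fin L)
    (hsize : ∀ j k, cl j = cl k → ∀ ℓ, wrap (t j ℓ - t k ℓ) ≤ 1 / N)
    (hsep : ∀ j k, cl j ≠ cl k → ρ / N ≤ ⨆ ℓ, wrap (t j ℓ - t k ℓ))
    (hlam : ∀ l : Fin L, {j : Fin M | cl j = l}.ncard ≤ lam)
    (j : Fin M) (m : ℕ) (hm : 1 ≤ m) :
    {k : Fin M | (m : ℝ) * ρ ≤ (N : ℝ) * ⨆ ℓ, wrap (t j ℓ - t k ℓ) ∧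
        (N : ℝ) * (⨆ ℓ, wrap (t j ℓ - t k ℓ)) < ((m : ℝ) + 1) * ρ}.ncard
      ≤ 2 ^ d * (2 ^ d - 1) * m ^ (d - 1) * lam :=
  stmt18_general d N L M lam hN ρ hρ t cl hsep hlam j m hm
end
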